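/- arXiv:2310.04176 — 4 statements merged into one kernel-verified Lean document; each statement's English description precedes it below -/
import Mathlib

section
/- A joint strategy x* in the shared constraint set X is a Nash equilibrium of the N-player game if and only if for every player i, x* is a Pareto optimal point (with respect to the natural ordering cone) of the multi-objective problem of minimizing the vector-valued map x ↦ (x_{-i}, -x_{-i}, f_i(x)) over X. -/
/-! Componentwise, `(x_{-i}, -x_{-i}) ≤ (x*_{-i}, -x*_{-i})` forces `x_{-i} = x*_{-i}`, so a point
of `X` strictly dominating `x*` for player `i`'s objective is exactly a unilateral deviation of
player `i` from `x*` that strictly lowers `f_i`. -/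

/-- The objective map `x ↦ (x_{-i}, -x_{-i}, f_i(x))` of the multi-objective
problem associated to player `i`. -/
def gameObjective {N : ℕ} (n : Fin N → ℕ) (i : Fin N)
    (fi : (∀ j, Fin (n j) → ℝ) → ℝ) (x : ∀ j, Fin (n j) → ℝ) :
    (∀ j : {j : Fin N // j ≠ i}, Fin (n j.1) → ℝ) ×
      (∀ j : {j : Fin N // j ≠ i}, Fin (n j.1) → ℝ) × ℝ :=
  (fun j => x j.1, fun j => -(x j.1), fi x)

theorem le_and_neg_le_neg_iff {α : Type*} [AddCommGroup α] [PartialOrder α]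
    [IsOrderedAddMonoid α] {a b : α} : a ≤ b ∧ -a ≤ -b ↔ a = b := by
  rw [neg_le_neg_iff, le_antisymm_iff]

theorem forall_update_ge_iff_not_exists_lt {ι : Type*} [DecidableEq ι] {β : ι → Type*}
    {α : Type*} [LinearOrder α] (X : Set (∀ j, β j)) (g : (∀ j, β j) → α) (x : ∀ j, β j)
    (i : ι) :
    (∀ xi : β i, Function.update x i xi ∈ X → g (Function.update x i xi) ≥ g x) ↔
      ¬∃ y ∈ X, (∀ j ≠ i, y j = x j) ∧ g y < g x := by
  push Not
  constructor
  · intro h y hy hoff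
    have hupd : y = Function.update x i (y i) := Function.eq_update_iff.2 ⟨rfl, hoff⟩
    rw [hupd] at hy ⊢
    exact h _ hy
  · intro h xi hxi
    exact h _ hxi fun j hj => Function.update_of_ne hj _ _

section gameObjective

variable {N : ℕ} {n : Fin N → ℕ} {i : Fin N} {fi : (∀ j, Fin (n j) → ℝ) → ℝ}
  {x y : ∀ j, Fin (n j) → ℝ}

theorem gameObjective_le_iff :
    gameObjective n i fi x ≤ gameObjective n i fi y ↔ (∀ j ≠ i, x j = y j) ∧ fi x ≤ fi y := by
  rw [gameObjective, gameObjective, Prod.mk_le_mk, Prod.mk_le_mk, ← and_assoc]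
  exact and_congr_left' (le_and_neg_le_neg_iff.trans (funext_iff.trans Subtype.forall))

theorem gameObjective_lt_iff :
    gameObjective n i fi x < gameObjective n i fi y ↔ (∀ j ≠ i, x j = y j) ∧ fi x < fi y := by
  constructor
  · intro h
    obtain ⟨hoff, hle⟩ := gameObjective_le_iff.1 h.le
    exact ⟨hoff, hle.lt_of_not_ge fun hge =>
      h.not_ge (gameObjective_le_iff.2 ⟨fun j hj => (hoff j hj).symm, hge⟩)⟩
  · rintro ⟨hoff, hlt⟩
    exact lt_of_le_not_ge (gameObjective_le_iff.2 ⟨hoff, hlt.le⟩) fun h =>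
      hlt.not_ge (gameObjective_le_iff.1 h).2

end gameObjective

theorem nash_iff_pareto_general {N : ℕ} (n : Fin N → ℕ)
    (X : Set (∀ j, Fin (n j) → ℝ))
    (f : Fin N → (∀ j, Fin (n j) → ℝ) → ℝ)
    (xstar : ∀ j, Fin (n j) → ℝ) :
    (∀ i : Fin N, ∀ xi : Fin (n i) → ℝ,
        Function.update xstar i xi ∈ X →
          f i (Function.update xstar i xi) ≥ f i xstar)
      ↔
    (∀ i : Fin N, ¬ ∃ x ∈ X,
        gameObjective n i (f i) x ≤ gameObjective n i (f i) xstar ∧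
        gameObjective n i (f i) x ≠ gameObjective n i (f i) xstar) := by
  simp only [← lt_iff_le_and_ne, gameObjective_lt_iff]
  exact forall_congr' fun i => forall_update_ge_iff_not_exists_lt X (f i) xstar i

/-- A joint strategy `x*` in the shared constraint set `X` is a Nash equilibrium
iff for every player `i`, `x*` is Pareto optimal (w.r.t. the componentwise,
i.e. natural ordering cone, order) for `min { (x_{-i}, -x_{-i}, f_i(x)) : x ∈ X }`. -/
theorem nash_iff_pareto {N : ℕ} (hN : 2 ≤ N) (n : Fin N → ℕ)
    (X : Set (∀ j, Fin (n j) → ℝ))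
    (f : Fin N → (∀ j, Fin (n j) → ℝ) → ℝ)
    (xstar : ∀ j, Fin (n j) → ℝ) (hxstar : xstar ∈ X) :
    (∀ i : Fin N, ∀ xi : Fin (n i) → ℝ,
        Function.update xstar i xi ∈ X →
          f i (Function.update xstar i xi) ≥ f i xstar)
      ↔
    (∀ i : Fin N, ¬ ∃ x ∈ X,
        gameObjective n i (f i) x ≤ gameObjective n i (f i) xstar ∧
        gameObjective n i (f i) x ≠ gameObjective n i (f i) xstar) :=
  nash_iff_pareto_general n X f xstar
end

section
/- For any ε > 0, a joint strategy x* ∈ X is an ε-approximate Nash equilibrium if and only if for every player i, x* is an ε-Pareto optimal point with respect to the direction c̄_i = (0,...,0,1) of the multi-objective problem of minimizing x ↦ (x_{-i}, -x_{-i}, f_i(x)) over X. -/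
/-- `g(x*) - ε c̄_i` where `c̄_i = (0,...,0,1)` is the last standard basis vector:
only the last (cost) component of the objective is shifted down by `ε`. -/
def gameObjectiveShift {N : ℕ} (n : Fin N → ℕ) (i : Fin N)
    (fi : (∀ j, Fin (n j) → ℝ) → ℝ) (ε : ℝ) (x : ∀ j, Fin (n j) → ℝ) :
    (∀ j : {j : Fin N // j ≠ i}, Fin (n j.1) → ℝ) ×
      (∀ j : {j : Fin N // j ≠ i}, Fin (n j.1) → ℝ) × ℝ :=
  (fun j => x j.1, fun j => -(x j.1), fi x - ε)

/-!
The first two blocks `x_{-i}` and `-x_{-i}` of the objective can only both be weakly below those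
of `x*` when `x_{-i} = x*_{-i}`, i.e. when `x` is a unilateral deviation of player `i` from `x*`.
So a point strictly dominating `g(x*) - ε c̄_i` is exactly a deviation `x_i` of player `i`
lowering his cost by more than `ε`, which is what an `ε`-Nash equilibrium excludes.
-/

section GameObjective

variable {N : ℕ} {n : Fin N → ℕ} {i : Fin N} {fi : (∀ j, Fin (n j) → ℝ) → ℝ} {ε : ℝ}
  {x y : ∀ j, Fin (n j) → ℝ}

theorem gameObjective_le_gameObjectiveShift_iff :
    gameObjective n i fi x ≤ gameObjectiveShift n i fi ε y ↔
      (∀ j ≠ i, x j = y j) ∧ fi x ≤ fi y - ε := by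
  rw [gameObjective, gameObjectiveShift, Prod.mk_le_mk, Prod.mk_le_mk, ← and_assoc, Pi.le_def,
    Pi.le_def]
  simp only [neg_le_neg_iff, ← forall_and, ← le_antisymm_iff, Subtype.forall]

theorem gameObjective_eq_gameObjectiveShift_iff :
    gameObjective n i fi x = gameObjectiveShift n i fi ε y ↔
      (∀ j ≠ i, x j = y j) ∧ fi x = fi y - ε := by
  simp only [gameObjective, gameObjectiveShift, Prod.mk.injEq, neg_inj, and_self_left,
    funext_iff, Subtype.forall]

theorem gameObjective_lt_gameObjectiveShift_iff :
    gameObjective n i fi x < gameObjectiveShift n i fi ε y ↔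
      (∀ j ≠ i, x j = y j) ∧ fi x + ε < fi y := by
  rw [lt_iff_le_and_ne, gameObjective_le_gameObjectiveShift_iff, Ne,
    gameObjective_eq_gameObjectiveShift_iff, ← lt_sub_iff_add_lt, lt_iff_le_and_ne]
  tauto

theorem exists_gameObjective_lt_gameObjectiveShift_iff {X : Set (∀ j, Fin (n j) → ℝ)} :
    (∃ x ∈ X, gameObjective n i fi x < gameObjectiveShift n i fi ε y) ↔
      ∃ xi, Function.update y i xi ∈ X ∧ fi (Function.update y i xi) + ε < fi y := by
  simp only [gameObjective_lt_gameObjectiveShift_iff]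
  constructor
  · rintro ⟨x, hxX, hxy, hlt⟩
    have hx : x = Function.update y i (x i) := Function.eq_update_iff.2 ⟨rfl, hxy⟩
    exact ⟨x i, hx ▸ hxX, hx ▸ hlt⟩
  · rintro ⟨xi, hX, hlt⟩
    exact ⟨_, hX, fun j hj => Function.update_of_ne hj _ _, hlt⟩

end GameObjective

theorem epsNash_iff_epsPareto_general {N : ℕ} (n : Fin N → ℕ)
    (X : Set (∀ j, Fin (n j) → ℝ))
    (f : Fin N → (∀ j, Fin (n j) → ℝ) → ℝ)
    (ε : ℝ)
    (xstar : ∀ j, Fin (n j) → ℝ) :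
    (∀ i : Fin N, ∀ xi : Fin (n i) → ℝ,
        Function.update xstar i xi ∈ X →
          f i (Function.update xstar i xi) + ε ≥ f i xstar)
      ↔
    (∀ i : Fin N, ¬ ∃ x ∈ X,
        gameObjective n i (f i) x ≤ gameObjectiveShift n i (f i) ε xstar ∧
        gameObjective n i (f i) x ≠ gameObjectiveShift n i (f i) ε xstar) := by
  simp only [← lt_iff_le_and_ne, exists_gameObjective_lt_gameObjectiveShift_iff, not_exists,
    not_and, not_lt, ge_iff_le]

/-- For every `ε > 0`, `x* ∈ X` is an `ε`-approximate Nash equilibrium iff for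
every player `i`, `x*` is `ε`-Pareto optimal with respect to the direction
`c̄_i = (0,...,0,1)` for `min { (x_{-i}, -x_{-i}, f_i(x)) : x ∈ X }`, i.e.
`(g(x*) - ε c̄_i - ℝ^{m_i}_+ \ {0}) ∩ g[X] = ∅`. -/
theorem epsNash_iff_epsPareto {N : ℕ} (hN : 2 ≤ N) (n : Fin N → ℕ)
    (X : Set (∀ j, Fin (n j) → ℝ))
    (f : Fin N → (∀ j, Fin (n j) → ℝ) → ℝ)
    (ε : ℝ) (hε : 0 < ε)
    (xstar : ∀ j, Fin (n j) → ℝ) (hxstar : xstar ∈ X) :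
    (∀ i : Fin N, ∀ xi : Fin (n i) → ℝ,
        Function.update xstar i xi ∈ X →
          f i (Function.update xstar i xi) + ε ≥ f i xstar)
      ↔
    (∀ i : Fin N, ¬ ∃ x ∈ X,
        gameObjective n i (f i) x ≤ gameObjectiveShift n i (f i) ε xstar ∧
        gameObjective n i (f i) x ≠ gameObjectiveShift n i (f i) ε xstar) :=
  epsNash_iff_epsPareto_general n X f ε xstar
end

section
/- Suppose for each player i we have a set X_i with argmin_Pareto{(x_{-i}, -x_{-i}, f_i(x)) : x ∈ X} ⊆ X_i ⊆ ε-argmin{(x_{-i}, -x_{-i}, f_i(x)) : x ∈ X} (ε-Pareto with respect to direction c̄_i). Then X := ∩_{i=1}^N X_i satisfies NE(f, X) ⊆ X ⊆ εNE(f, X). -/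
/-
A Nash equilibrium point `x` is Pareto optimal for player `i`: a point `x'` that weakly improves
`(x_{-i}, -x_{-i}, f_i(x))` must agree with `x` off coordinate `i`, so it is a unilateral deviation
of player `i` and cannot decrease `f_i`, hence has the same objective value. Conversely, a
deviation lowering `f_i` by more than `ε` would dominate the shifted objective, so an `ε`-Pareto
optimal point for every player is an `ε`-Nash equilibrium.
-/

section GameObjective

variable {N : ℕ} {n : Fin N → ℕ} {i : Fin N}

theorem gameObjectiveShift_eq (fi : (∀ j, Fin (n j) → ℝ) → ℝ) (ε : ℝ) :
    gameObjectiveShift n i fi ε = gameObjective n i (fun y => fi y - ε) :=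
  rfl

theorem gameObjective_le_gameObjective_iff {fi gi : (∀ j, Fin (n j) → ℝ) → ℝ}
    {x' x : ∀ j, Fin (n j) → ℝ} :
    gameObjective n i fi x' ≤ gameObjective n i gi x ↔ (∀ j ≠ i, x' j = x j) ∧ fi x' ≤ gi x := by
  simp only [gameObjective, Prod.mk_le_mk, Pi.le_def, neg_le_neg_iff, Subtype.forall]
  constructor
  · rintro ⟨hle, hge, hf⟩
    exact ⟨fun j hj => le_antisymm (hle j hj) (hge j hj), hf⟩
  · rintro ⟨heq, hf⟩
    exact ⟨fun j hj => (heq j hj).le, fun j hj => (heq j hj).ge, hf⟩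

theorem not_exists_gameObjective_lt_of_forall_update_ge {X : Set (∀ j, Fin (n j) → ℝ)}
    {fi : (∀ j, Fin (n j) → ℝ) → ℝ} {x : ∀ j, Fin (n j) → ℝ}
    (hx : ∀ xi : Fin (n i) → ℝ, Function.update x i xi ∈ X → fi (Function.update x i xi) ≥ fi x) :
    ¬ ∃ x' ∈ X, gameObjective n i fi x' ≤ gameObjective n i fi x ∧
      gameObjective n i fi x' ≠ gameObjective n i fi x := by
  rintro ⟨x', hx'X, hle, hne⟩
  obtain ⟨hoff, -⟩ := gameObjective_le_gameObjective_iff.1 hle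
  have hdev : x' = Function.update x i (x' i) := Function.eq_update_iff.2 ⟨rfl, hoff⟩
  have hge : fi x ≤ fi x' := by
    rw [hdev] at hx'X ⊢
    exact hx _ hx'X
  exact hne (le_antisymm hle
    (gameObjective_le_gameObjective_iff.2 ⟨fun j hj => (hoff j hj).symm, hge⟩))

theorem forall_update_add_ge_of_not_exists_gameObjective_lt_shift
    {X : Set (∀ j, Fin (n j) → ℝ)} {fi : (∀ j, Fin (n j) → ℝ) → ℝ} {ε : ℝ}
    {x : ∀ j, Fin (n j) → ℝ}
    (hx : ¬ ∃ x' ∈ X, gameObjective n i fi x' ≤ gameObjectiveShift n i fi ε x ∧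
      gameObjective n i fi x' ≠ gameObjectiveShift n i fi ε x) :
    ∀ xi : Fin (n i) → ℝ, Function.update x i xi ∈ X →
      fi (Function.update x i xi) + ε ≥ fi x := by
  intro xi hxiX
  by_contra! hgain
  have hlt : fi (Function.update x i xi) < fi x - ε := by linarith
  rw [gameObjectiveShift_eq] at hx
  refine hx ⟨_, hxiX, gameObjective_le_gameObjective_iff.2
    ⟨fun j hj => Function.update_of_ne hj _ _, hlt.le⟩, fun h => hlt.ne ?_⟩
  exact congrArg (fun p => p.2.2) h

end GameObjective

theorem sandwich_from_playerwise_sandwich_general {N : ℕ} (hN : 2 ≤ N) (n : Fin N → ℕ)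
    (X : Set (∀ j, Fin (n j) → ℝ))
    (f : Fin N → (∀ j, Fin (n j) → ℝ) → ℝ)
    (ε : ℝ)
    (Xi : Fin N → Set (∀ j, Fin (n j) → ℝ))
    (hlower : ∀ i : Fin N,
      {x ∈ X | ¬ ∃ x' ∈ X,
          gameObjective n i (f i) x' ≤ gameObjective n i (f i) x ∧
          gameObjective n i (f i) x' ≠ gameObjective n i (f i) x} ⊆ Xi i)
    (hupper : ∀ i : Fin N,
      Xi i ⊆ {x ∈ X | ¬ ∃ x' ∈ X,
          gameObjective n i (f i) x' ≤ gameObjectiveShift n i (f i) ε x ∧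
          gameObjective n i (f i) x' ≠ gameObjectiveShift n i (f i) ε x}) :
    {x ∈ X | ∀ i : Fin N, ∀ xi : Fin (n i) → ℝ,
        Function.update x i xi ∈ X → f i (Function.update x i xi) ≥ f i x}
      ⊆ (⋂ i : Fin N, Xi i)
    ∧ (⋂ i : Fin N, Xi i)
      ⊆ {x ∈ X | ∀ i : Fin N, ∀ xi : Fin (n i) → ℝ,
          Function.update x i xi ∈ X → f i (Function.update x i xi) + ε ≥ f i x} := by
  constructor
  · rintro x ⟨hxX, hNE⟩
    exact Set.mem_iInter.2 fun i =>
      hlower i ⟨hxX, not_exists_gameObjective_lt_of_forall_update_ge (hNE i)⟩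
  · intro x hx
    have hxi : ∀ i, x ∈ Xi i := Set.mem_iInter.1 hx
    -- `X` is recovered from any single player's upper bound, so some player must exist.
    refine ⟨(hupper ⟨0, by omega⟩ (hxi _)).1, fun i => ?_⟩
    exact forall_update_add_ge_of_not_exists_gameObjective_lt_shift (hupper i (hxi i)).2

/-- If for each player `i` the set `Xi i` is sandwiched between the Pareto
optimal points and the `ε`-Pareto optimal points (w.r.t. `c̄_i`) of
`min { (x_{-i}, -x_{-i}, f_i(x)) : x ∈ X }`, then `⋂ i, Xi i` is sandwiched
between `NE(f, X)` and `εNE(f, X)`. -/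
theorem sandwich_from_playerwise_sandwich {N : ℕ} (hN : 2 ≤ N) (n : Fin N → ℕ)
    (X : Set (∀ j, Fin (n j) → ℝ))
    (f : Fin N → (∀ j, Fin (n j) → ℝ) → ℝ)
    (ε : ℝ) (hε : 0 < ε)
    (Xi : Fin N → Set (∀ j, Fin (n j) → ℝ))
    (hlower : ∀ i : Fin N,
      {x ∈ X | ¬ ∃ x' ∈ X,
          gameObjective n i (f i) x' ≤ gameObjective n i (f i) x ∧
          gameObjective n i (f i) x' ≠ gameObjective n i (f i) x} ⊆ Xi i)
    (hupper : ∀ i : Fin N,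
      Xi i ⊆ {x ∈ X | ¬ ∃ x' ∈ X,
          gameObjective n i (f i) x' ≤ gameObjectiveShift n i (f i) ε x ∧
          gameObjective n i (f i) x' ≠ gameObjectiveShift n i (f i) ε x}) :
    {x ∈ X | ∀ i : Fin N, ∀ xi : Fin (n i) → ℝ,
        Function.update x i xi ∈ X → f i (Function.update x i xi) ≥ f i x}
      ⊆ (⋂ i : Fin N, Xi i)
    ∧ (⋂ i : Fin N, Xi i)
      ⊆ {x ∈ X | ∀ i : Fin N, ∀ xi : Fin (n i) → ℝ,
          Function.update x i xi ∈ X → f i (Function.update x i xi) + ε ≥ f i x} :=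
  sandwich_from_playerwise_sandwich_general hN n X f ε Xi hlower hupper
end

section
/- In the two-player pollution game with f_i(x) = ½(x₁ + x₂)² − β_i x_i, β₁ = 1.1, β₂ = 2, and shared constraint set X = {(x₁, x₂) ∈ [0,1]² : x₁ + 0.4·x₂ ≤ 1}, the set of Nash equilibria is {(1/10, 1)} ∪ {(x₁, (5/2)(1 − x₁)) : x₁ ∈ [14/15, 1]}. -/
/-!
Up to a constant, firm `i`'s cost `½ (xᵢ + x₋ᵢ)² - βᵢ xᵢ` is `½ (xᵢ - (βᵢ - x₋ᵢ))²`, so its best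
response on its interval of feasible strategies is the projection of `βᵢ - x₋ᵢ` onto that
interval, and the Nash equilibria are the fixed points of the two clamped linear maps.
Firm 2's best response to `x₁` is `min 1 (5/2 (1 - x₁))`. When it is `1`, firm 1 answers
`1/10`. Otherwise the shared constraint binds, firm 1's interval is `[0, x₁]`, and `x₁` is
optimal exactly when `x₁ ≤ 1.1 - x₂`, i.e. when `x₁ ≥ 14/15`.
-/

open Set

theorem isMinOn_half_sq_sub_Icc_iff {c β l u x : ℝ} (hx : x ∈ Icc l u) :
    IsMinOn (fun y : ℝ ↦ 1 / 2 * (y + c) ^ 2 - β * y) (Icc l u) x ↔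
      x = max l (min u (β - c)) := by
  obtain ⟨hlx, hxu⟩ := hx
  have hdiff : ∀ y : ℝ, (1 / 2 * (y + c) ^ 2 - β * y) - (1 / 2 * (x + c) ^ 2 - β * x) =
      1 / 2 * (y - x) * (y + x - 2 * (β - c)) := fun y ↦ by ring
  simp only [isMinOn_iff, mem_Icc]
  rcases le_total (β - c) l with htl | hlt
  · rw [min_eq_right (htl.trans (hlx.trans hxu)), max_eq_left htl]
    constructor
    · intro h
      nlinarith [h l ⟨le_rfl, hlx.trans hxu⟩, hdiff l]
    · rintro rfl y ⟨hly, -⟩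
      nlinarith [hdiff y]
  rcases le_total u (β - c) with hut | htu
  · rw [min_eq_left hut, max_eq_right (hlx.trans hxu)]
    constructor
    · intro h
      nlinarith [h u ⟨hlx.trans hxu, le_rfl⟩, hdiff u]
    · rintro rfl y ⟨-, hyu⟩
      nlinarith [hdiff y]
  · rw [min_eq_right htu, max_eq_right hlt]
    constructor
    · intro h
      nlinarith [h (β - c) ⟨hlt, htu⟩, hdiff (β - c)]
    · rintro rfl y -
      nlinarith [hdiff y, sq_nonneg (y - (β - c))]

theorem pollution_firm_one_optimal_iff {a b : ℝ} (ha : a ∈ Icc (0 : ℝ) 1)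
    (hab : a + 0.4 * b ≤ 1) :
    (∀ x₁ ∈ Icc (0 : ℝ) 1, x₁ + 0.4 * b ≤ 1 →
        (1 / 2) * (x₁ + b) ^ 2 - 1.1 * x₁ ≥ (1 / 2) * (a + b) ^ 2 - 1.1 * a) ↔
      a = max 0 (min (min 1 (1 - 0.4 * b)) (1.1 - b)) := by
  have hfeasible : ∀ x : ℝ,
      (x ∈ Icc 0 1 ∧ x + 0.4 * b ≤ 1) ↔ x ∈ Icc 0 (min 1 (1 - 0.4 * b)) := by
    intro x
    simp only [mem_Icc, le_min_iff, and_assoc, le_sub_iff_add_le]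
  rw [← isMinOn_half_sq_sub_Icc_iff ((hfeasible a).1 ⟨ha, hab⟩), isMinOn_iff]
  simp only [← hfeasible, and_imp, ge_iff_le]

theorem pollution_firm_two_optimal_iff {a b : ℝ} (hb : b ∈ Icc (0 : ℝ) 1)
    (hab : a + 0.4 * b ≤ 1) :
    (∀ x₂ ∈ Icc (0 : ℝ) 1, a + 0.4 * x₂ ≤ 1 →
        (1 / 2) * (a + x₂) ^ 2 - 2 * x₂ ≥ (1 / 2) * (a + b) ^ 2 - 2 * b) ↔
      b = max 0 (min (min 1 (5 / 2 * (1 - a))) (2 - a)) := by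
  have hfeasible : ∀ y : ℝ,
      (y ∈ Icc 0 1 ∧ a + 0.4 * y ≤ 1) ↔ y ∈ Icc 0 (min 1 (5 / 2 * (1 - a))) := by
    intro y
    have hcap : a + 0.4 * y ≤ 1 ↔ y ≤ 5 / 2 * (1 - a) := by constructor <;> intro <;> linarith
    simp only [mem_Icc, le_min_iff, and_assoc, hcap]
  rw [← isMinOn_half_sq_sub_Icc_iff ((hfeasible b).1 ⟨hb, hab⟩), isMinOn_iff]
  simp only [← hfeasible, and_imp, ge_iff_le, add_comm a]

theorem pollution_best_response_fixed_point_iff {a b : ℝ} :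
    (a = max 0 (min (min 1 (1 - 0.4 * b)) (1.1 - b)) ∧
      b = max 0 (min (min 1 (5 / 2 * (1 - a))) (2 - a))) ↔
      (a = 1 / 10 ∧ b = 1) ∨ ∃ x₁ ∈ Icc (14 / 15 : ℝ) 1, a = x₁ ∧ b = 5 / 2 * (1 - x₁) := by
  constructor
  · rintro ⟨ha, hb⟩
    have ha₁ : a ≤ 1 := ha ▸ max_le zero_le_one ((min_le_left _ _).trans (min_le_left _ _))
    rcases le_total 1 (5 / 2 * (1 - a)) with hlow | hhigh
    · have hb₁ : b = 1 := by
        rw [hb, min_eq_left hlow, min_eq_left (by linarith), max_eq_right zero_le_one]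
      norm_num [hb₁] at ha
      exact Or.inl ⟨ha, hb₁⟩
    · have hb₂ : b = 5 / 2 * (1 - a) := by
        rw [hb, min_eq_right hhigh, min_eq_left (by linarith), max_eq_right (by linarith)]
      have hbinding : 1 - 0.4 * b = a := by rw [hb₂]; norm_num; ring
      rw [hbinding, min_eq_right ha₁] at ha
      have hinterior : a ≤ 1.1 - b := by
        by_contra! h
        rw [min_eq_right h.le] at ha
        rcases max_cases 0 (1.1 - b) with h' | h' <;> linarith
      exact Or.inr ⟨a, ⟨by linarith, ha₁⟩, rfl, hb₂⟩
  · rintro (⟨rfl, rfl⟩ | ⟨a, ⟨h₁, h₂⟩, rfl, rfl⟩)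
    · norm_num
    · have hbinding : 1 - 0.4 * (5 / 2 * (1 - a)) = a := by norm_num; ring
      constructor
      · rw [hbinding, min_eq_right h₂, min_eq_left (by linarith), max_eq_right (by linarith)]
      · rw [min_eq_right (by linarith : 5 / 2 * (1 - a) ≤ 1), min_eq_left (by linarith),
          max_eq_right (by linarith)]

/-- In the two-player pollution game with `fᵢ(x) = ½(x₁+x₂)² − βᵢxᵢ`,
`β₁ = 1.1`, `β₂ = 2`, and shared constraint set
`X = {(x₁,x₂) ∈ [0,1]² : x₁ + 0.4x₂ ≤ 1}`, the set of Nash equilibria is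
`{(1/10, 1)} ∪ {(x₁, (5/2)(1−x₁)) : x₁ ∈ [14/15, 1]}`. -/
theorem nash_set_pollution_example :
    {p : ℝ × ℝ | (p.1 ∈ Icc (0 : ℝ) 1 ∧ p.2 ∈ Icc (0 : ℝ) 1 ∧
        p.1 + 0.4 * p.2 ≤ 1) ∧
      (∀ x₁ ∈ Icc (0 : ℝ) 1, x₁ + 0.4 * p.2 ≤ 1 →
        (1/2) * (x₁ + p.2) ^ 2 - 1.1 * x₁ ≥
        (1/2) * (p.1 + p.2) ^ 2 - 1.1 * p.1) ∧
      (∀ x₂ ∈ Icc (0 : ℝ) 1, p.1 + 0.4 * x₂ ≤ 1 →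
        (1/2) * (p.1 + x₂) ^ 2 - 2 * x₂ ≥
        (1/2) * (p.1 + p.2) ^ 2 - 2 * p.2)}
    = {((1/10 : ℝ), (1 : ℝ))} ∪
      {p : ℝ × ℝ | ∃ x₁ ∈ Icc (14/15 : ℝ) 1, p = (x₁, (5/2) * (1 - x₁))} := by
  ext ⟨a, b⟩
  simp only [mem_ofPred_eq, mem_union, mem_singleton_iff, Prod.mk.injEq]
  constructor
  · rintro ⟨⟨ha, hb, hab⟩, h₁, h₂⟩
    exact pollution_best_response_fixed_point_iff.1
      ⟨(pollution_firm_one_optimal_iff ha hab).1 h₁, (pollution_firm_two_optimal_iff hb hab).1 h₂⟩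
  · intro h
    obtain ⟨ha, hb, hab⟩ : a ∈ Icc (0 : ℝ) 1 ∧ b ∈ Icc (0 : ℝ) 1 ∧ a + 0.4 * b ≤ 1 := by
      rcases h with ⟨rfl, rfl⟩ | ⟨a, ⟨h₁, h₂⟩, rfl, rfl⟩
      · norm_num
      · exact ⟨⟨by linarith, h₂⟩, ⟨by linarith, by linarith⟩, by linarith⟩
    obtain ⟨h₁, h₂⟩ := pollution_best_response_fixed_point_iff.2 h
    exact ⟨⟨ha, hb, hab⟩, (pollution_firm_one_optimal_iff ha hab).2 h₁,
      (pollution_firm_two_optimal_iff hb hab).2 h₂⟩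
end
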